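/- arXiv:1906.03486 — 3 statements merged into one kernel-verified Lean document; each statement's English description precedes it below -/
import Mathlib

section
/- Let μ be a σ-finite measure on a measurable space (X, F) and let P₀, P₁ be probability measures on (X, F) with densities p₀, p₁ with respect to μ. Set A = {x ∈ X : p₀(x) ≥ p₁(x)/2}. Then for every measurable test ψ : X → {0,1} one has max(P₀(ψ = 1), P₁(ψ = 0)) ≥ (1/3) P₁(A). -/
open MeasureTheory
open scoped ENNReal

/-! Proof idea: on `A ∩ B` the density `p₁` is at most `2 p₀`, so `P₁ (A ∩ B) ≤ 2 P₀ B`, and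
`P₁ A ≤ P₁ (A ∩ B) + P₁ Bᶜ ≤ 2 P₀ B + P₁ Bᶜ ≤ 3 max (P₀ B) (P₁ Bᶜ)`. -/

namespace MeasureTheory

variable {X : Type*} [MeasurableSpace X]

lemma withDensity_apply_le_const_mul {μ : Measure X} {f g : X → ℝ≥0∞} {s : Set X}
    (hs : MeasurableSet s) {c : ℝ≥0∞} (hc : c ≠ ∞) (hfg : ∀ x ∈ s, f x ≤ c * g x) :
    μ.withDensity f s ≤ c * μ.withDensity g s := by
  rw [withDensity_apply _ hs, withDensity_apply _ hs, ← lintegral_const_mul' c _ hc]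
  exact setLIntegral_mono' hs hfg

lemma measure_le_add_one_mul_max_of_inter_le {P₀ P₁ : Measure X} {A B : Set X} {c : ℝ≥0∞}
    (h : P₁ (A ∩ B) ≤ c * P₀ B) : P₁ A ≤ (c + 1) * max (P₀ B) (P₁ Bᶜ) :=
  calc P₁ A ≤ P₁ (A ∩ B) + P₁ (A \ B) := measure_le_inter_add_sdiff P₁ A B
    _ ≤ c * P₀ B + P₁ Bᶜ := add_le_add h (measure_mono (Set.sdiff_subset_compl A B))
    _ ≤ c * max (P₀ B) (P₁ Bᶜ) + max (P₀ B) (P₁ Bᶜ) :=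
      add_le_add (mul_le_mul_right (le_max_left _ _) c) (le_max_right _ _)
    _ = (c + 1) * max (P₀ B) (P₁ Bᶜ) := by ring

end MeasureTheory

theorem stmt_1_general {X : Type*} [MeasurableSpace X] (μ : Measure X)
    (p₀ p₁ : X → ℝ) (hp₀m : Measurable p₀) (hp₁m : Measurable p₁)
    (P₀ P₁ : Measure X)
    (hP₀ : P₀ = μ.withDensity fun x => ENNReal.ofReal (p₀ x))
    (hP₁ : P₁ = μ.withDensity fun x => ENNReal.ofReal (p₁ x)) :
    ∀ B : Set X, MeasurableSet B →
      P₁ {x | p₁ x / 2 ≤ p₀ x} / 3 ≤ max (P₀ B) (P₁ Bᶜ) := by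
  intro B hB
  set A : Set X := {x | p₁ x / 2 ≤ p₀ x}
  have hA : MeasurableSet A := measurableSet_le (hp₁m.div_const 2) hp₀m
  have h_density : ∀ x ∈ A ∩ B, ENNReal.ofReal (p₁ x) ≤ 2 * ENNReal.ofReal (p₀ x) := by
    intro x hx
    have hx : p₁ x ≤ 2 * p₀ x := by linarith [hx.1.out]
    simpa [ENNReal.ofReal_mul] using ENNReal.ofReal_le_ofReal hx
  have h_inter : P₁ (A ∩ B) ≤ 2 * P₀ B := by
    subst hP₀ hP₁
    calc _ ≤ 2 * μ.withDensity (fun x => ENNReal.ofReal (p₀ x)) (A ∩ B) :=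
          withDensity_apply_le_const_mul (hA.inter hB) ENNReal.ofNat_ne_top h_density
      _ ≤ _ := by gcongr; exact Set.inter_subset_right
  rw [ENNReal.div_le_iff (by norm_num) (by norm_num), mul_comm]
  simpa [two_add_one_eq_three] using measure_le_add_one_mul_max_of_inter_le h_inter

/-- Likelihood-ratio testing bound: if `P₀, P₁` have densities `p₀, p₁` with respect to a
σ-finite measure `μ` and `A = {p₀ ≥ p₁/2}`, then every measurable test (identified with the
measurable set `B` where it equals 1) satisfies `max(P₀(B), P₁(Bᶜ)) ≥ P₁(A)/3`. -/
theorem stmt_1 {X : Type*} [MeasurableSpace X] (μ : Measure X) [SigmaFinite μ]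
    (p₀ p₁ : X → ℝ) (hp₀m : Measurable p₀) (hp₁m : Measurable p₁)
    (hp₀ : ∀ x, 0 ≤ p₀ x) (hp₁ : ∀ x, 0 ≤ p₁ x)
    (P₀ P₁ : Measure X)
    (hP₀ : P₀ = μ.withDensity fun x => ENNReal.ofReal (p₀ x))
    (hP₁ : P₁ = μ.withDensity fun x => ENNReal.ofReal (p₁ x))
    [IsProbabilityMeasure P₀] [IsProbabilityMeasure P₁] :
    ∀ B : Set X, MeasurableSet B →
      P₁ {x | p₁ x / 2 ≤ p₀ x} / 3 ≤ max (P₀ B) (P₁ Bᶜ) :=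
  stmt_1_general μ p₀ p₁ hp₀m hp₁m P₀ P₁ hP₀ hP₁
end

section
/- Let μ be a σ-finite measure on a measurable space (X, F) and let P₀, P₁ be probability measures on (X, F) with densities p₀, p₁ with respect to μ, such that P₁ is absolutely continuous with respect to P₀ and the Kullback–Leibler divergence K := K(P₁, P₀) = ∫ log(p₁/p₀) dP₁ is finite. Then for every measurable test ψ : X → {0,1}, max(P₀(ψ = 1), P₁(ψ = 0)) ≥ (1/3)(1 − (K + √(2K))/log 2). In particular, there exists μ₀ > 0 such that if K ≤ μ₀ then every test incurs maximal error probability greater than 1/4. -/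
/-! With `t = p₀ / p₁` we have `t > 0` `P₁`-a.e., `∫ t dP₁ ≤ 1` and `K = -∫ log t dP₁`.
Since `eˢ ≥ 1 + s + s²/2`, pointwise `(log t)⁺ ≤ (t - 1 - log t)/ε + ε/2`, whence
`∫ (log t)⁺ dP₁ ≤ K/ε + ε/2` and, optimising in `ε`, `∫ (log t)⁺ dP₁ ≤ √(2K)`.
Markov's inequality for `(-log t)⁺ = -log t + (log t)⁺` gives
`log 2 · P₁(t ≤ 1/2) ≤ K + √(2K)`. On `A = {t > 1/2}` we have `p₁ ≤ 2 p₀`, so every test `B`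
satisfies `P₁(A) ≤ 2 P₀(B) + P₁(Bᶜ) ≤ 3 max(P₀(B), P₁(Bᶜ))`. -/

open MeasureTheory Real Set
open scoped ENNReal NNReal

lemma le_sqrt_two_mul_of_forall_le_div_add {a K : ℝ} (hK : 0 ≤ K)
    (h : ∀ ε > 0, a ≤ K / ε + ε / 2) : a ≤ √(2 * K) := by
  rcases hK.eq_or_lt with rfl | hK
  · simp only [zero_div, zero_add, mul_zero, sqrt_zero] at h ⊢
    exact le_of_forall_pos_lt_add fun δ hδ => by linarith [h δ hδ]
  · have hs : 0 < √(2 * K) := by positivity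
    have hsq : √(2 * K) ^ 2 = 2 * K := sq_sqrt (by positivity)
    have hdiv : K / √(2 * K) = √(2 * K) / 2 := by
      rw [div_eq_iff hs.ne']; linear_combination (-1 / 2) * hsq
    linarith [h _ hs]

lemma max_log_zero_le_div_add {t ε : ℝ} (ht : 0 < t) (hε : 0 < ε) :
    max (log t) 0 ≤ (t - 1 - log t) / ε + ε / 2 := by
  rcases le_or_gt (log t) 0 with hlog | hlog
  · rw [max_eq_right hlog]
    have := log_le_sub_one_of_pos ht
    positivity
  · rw [max_eq_left hlog.le]
    have hexp : 1 + log t + log t ^ 2 / 2 ≤ t := by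
      simpa [exp_log ht] using quadratic_le_exp_of_nonneg hlog.le
    calc log t ≤ log t ^ 2 / 2 / ε + ε / 2 := by
          rw [div_div, div_add_div _ _ (by positivity) two_ne_zero, le_div_iff₀ (by positivity)]
          nlinarith [sq_nonneg (log t - ε)]
      _ ≤ (t - 1 - log t) / ε + ε / 2 := by gcongr; linarith

section LikelihoodRatio

variable {X : Type*} [MeasurableSpace X] {P : Measure X} [IsProbabilityMeasure P] {t : X → ℝ}

lemma integral_max_log_zero_le (ht : ∀ᵐ x ∂P, 0 < t x) (ht_int : Integrable t P)
    (ht_le : ∫ x, t x ∂P ≤ 1) (hlog : Integrable (fun x => log (t x)) P) :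
    ∫ x, max (log (t x)) 0 ∂P ≤ √(2 * -∫ x, log (t x) ∂P) := by
  set K := -∫ x, log (t x) ∂P
  have ht_sub : Integrable (fun x => t x - 1) P := ht_int.sub (integrable_const 1)
  have hgap : Integrable (fun x => t x - 1 - log (t x)) P := ht_sub.sub hlog
  have hgap_eq : ∫ x, (t x - 1 - log (t x)) ∂P = ∫ x, t x ∂P - 1 + K := by
    rw [integral_sub ht_sub hlog, integral_sub ht_int (integrable_const 1)]
    simp [K]; ring
  have hgap_nonneg : 0 ≤ ∫ x, (t x - 1 - log (t x)) ∂P :=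
    integral_nonneg_of_ae <| ht.mono fun x hx => by
      simp only [Pi.zero_apply]; linarith [log_le_sub_one_of_pos hx]
  refine le_sqrt_two_mul_of_forall_le_div_add (by linarith) fun ε hε => ?_
  calc ∫ x, max (log (t x)) 0 ∂P ≤ ∫ x, ((t x - 1 - log (t x)) / ε + ε / 2) ∂P :=
        integral_mono_ae hlog.pos_part ((hgap.div_const ε).add (integrable_const _))
          (ht.mono fun x hx => max_log_zero_le_div_add hx hε)
    _ = (∫ x, t x ∂P - 1 + K) / ε + ε / 2 := by
        rw [integral_add (hgap.div_const ε) (integrable_const _), integral_div, hgap_eq]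
        simp
    _ ≤ K / ε + ε / 2 := by gcongr; linarith

lemma log_two_mul_measureReal_le (ht : ∀ᵐ x ∂P, 0 < t x) (ht_int : Integrable t P)
    (ht_le : ∫ x, t x ∂P ≤ 1) (hlog : Integrable (fun x => log (t x)) P) :
    log 2 * P.real {x | t x ≤ 1 / 2}
      ≤ -∫ x, log (t x) ∂P + √(2 * -∫ x, log (t x) ∂P) := by
  have hset : {x | t x ≤ 1 / 2} =ᵐ[P] {x | log 2 ≤ max (-log (t x)) 0} := by
    refine Filter.eventuallyEq_set.2 (ht.mono fun x hx => ?_)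
    have hlog2 : ¬ log 2 ≤ 0 := not_le.2 (log_pos one_lt_two)
    change t x ≤ 1 / 2 ↔ log 2 ≤ max (-log (t x)) 0
    rw [le_max_iff, or_iff_left hlog2, le_neg, ← log_inv,
      log_le_log_iff hx (by norm_num), one_div]
  have hsplit : ∀ x, max (-log (t x)) 0 = -log (t x) + max (log (t x)) 0 := fun x => by
    rcases le_total (log (t x)) 0 with h | h <;> simp [h]
  calc log 2 * P.real {x | t x ≤ 1 / 2}
      = log 2 * P.real {x | log 2 ≤ max (-log (t x)) 0} := by rw [measureReal_congr hset]
    _ ≤ ∫ x, max (-log (t x)) 0 ∂P :=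
        mul_meas_ge_le_integral_of_nonneg (ae_of_all _ fun _ => le_max_right _ _)
          hlog.neg.pos_part _
    _ = -∫ x, log (t x) ∂P + ∫ x, max (log (t x)) 0 ∂P := by
        have hneg : Integrable (fun x => -log (t x)) P := hlog.neg
        simp only [hsplit]; rw [integral_add hneg hlog.pos_part, integral_neg]
    _ ≤ _ := by gcongr; exact integral_max_log_zero_le ht ht_int ht_le hlog

end LikelihoodRatio

lemma integrable_and_integral_le_of_lintegral_ofReal_le {X : Type*} [MeasurableSpace X]
    {P : Measure X} {f : X → ℝ} {c : ℝ} (hc : 0 ≤ c) (hf : 0 ≤ᵐ[P] f)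
    (hfm : AEStronglyMeasurable f P) (hle : ∫⁻ x, ENNReal.ofReal (f x) ∂P ≤ ENNReal.ofReal c) :
    Integrable f P ∧ ∫ x, f x ∂P ≤ c :=
  ⟨⟨hfm, (hasFiniteIntegral_iff_ofReal hf).2 (hle.trans_lt ENNReal.ofReal_lt_top)⟩,
    (integral_eq_lintegral_of_nonneg_ae hf hfm).trans_le (ENNReal.toReal_le_of_le_ofReal hc hle)⟩

section Densities

variable {X : Type*} [MeasurableSpace X] {μ : Measure X} {p₀ p₁ : X → ℝ}

lemma ae_withDensity_ofReal_pos (hp₀ : Measurable p₀) :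
    ∀ᵐ x ∂μ.withDensity (fun x => ENNReal.ofReal (p₀ x)), 0 < p₀ x :=
  (ae_withDensity_iff hp₀.ennreal_ofReal).2 (ae_of_all _ fun _ => ENNReal.ofReal_ne_zero_iff.1)

lemma ae_div_pos_of_absolutelyContinuous (hp₀ : Measurable p₀) (hp₁ : Measurable p₁)
    (hac : μ.withDensity (fun x => ENNReal.ofReal (p₁ x))
      ≪ μ.withDensity (fun x => ENNReal.ofReal (p₀ x))) :
    ∀ᵐ x ∂μ.withDensity (fun x => ENNReal.ofReal (p₁ x)), 0 < p₀ x / p₁ x := by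
  filter_upwards [ae_withDensity_ofReal_pos hp₁, hac.ae_le (ae_withDensity_ofReal_pos hp₀)]
    with x h₁ h₀ using div_pos h₀ h₁

lemma lintegral_ofReal_div_withDensity_le (hp₀ : Measurable p₀) (hp₁ : Measurable p₁) :
    ∫⁻ x, ENNReal.ofReal (p₀ x / p₁ x) ∂μ.withDensity (fun x => ENNReal.ofReal (p₁ x))
      ≤ ∫⁻ x, ENNReal.ofReal (p₀ x) ∂μ := by
  rw [lintegral_withDensity_eq_lintegral_mul _ hp₁.ennreal_ofReal (hp₀.fun_div hp₁).ennreal_ofReal]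
  refine lintegral_mono fun x => ?_
  rcases le_or_gt (p₁ x) 0 with h | h
  · simp [ENNReal.ofReal_of_nonpos h]
  · rw [Pi.mul_apply, ← ENNReal.ofReal_mul h.le, mul_div_cancel₀ _ h.ne']

lemma integrable_div_and_integral_div_le_one (hp₀ : Measurable p₀) (hp₁ : Measurable p₁)
    [IsProbabilityMeasure (μ.withDensity fun x => ENNReal.ofReal (p₀ x))]
    (hpos : ∀ᵐ x ∂μ.withDensity (fun x => ENNReal.ofReal (p₁ x)), 0 < p₀ x / p₁ x) :
    Integrable (fun x => p₀ x / p₁ x) (μ.withDensity fun x => ENNReal.ofReal (p₁ x)) ∧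
      ∫ x, p₀ x / p₁ x ∂μ.withDensity (fun x => ENNReal.ofReal (p₁ x)) ≤ 1 := by
  refine integrable_and_integral_le_of_lintegral_ofReal_le zero_le_one
    (hpos.mono fun x hx => hx.le) (hp₀.div hp₁).aestronglyMeasurable ?_
  rw [ENNReal.ofReal_one, ← measure_univ (μ := μ.withDensity fun x => ENNReal.ofReal (p₀ x)),
    withDensity_apply _ MeasurableSet.univ, Measure.restrict_univ]
  exact lintegral_ofReal_div_withDensity_le hp₀ hp₁

lemma restrict_withDensity_le_smul_withDensity {f g : X → ℝ≥0∞} {A : Set X}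
    (hA : MeasurableSet A) {c : ℝ≥0} (h : ∀ x ∈ A, f x ≤ c * g x) :
    (μ.withDensity f).restrict A ≤ (c : ℝ≥0∞) • μ.withDensity g := by
  refine Measure.le_iff.2 fun s hs => ?_
  rw [Measure.restrict_apply hs, withDensity_apply _ (hs.inter hA), Measure.smul_apply,
    withDensity_apply _ hs, smul_eq_mul, ← lintegral_const_mul' _ _ ENNReal.coe_ne_top]
  calc ∫⁻ x in s ∩ A, f x ∂μ ≤ ∫⁻ x in s ∩ A, c * g x ∂μ :=
        setLIntegral_mono' (hs.inter hA) fun x hx => h x hx.2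
    _ ≤ ∫⁻ x in s, c * g x ∂μ := lintegral_mono_set inter_subset_left

lemma restrict_withDensity_inv_lt_div_le_smul (hp₀ : Measurable p₀) (hp₁ : Measurable p₁)
    {c : ℝ≥0} (hc : 0 < c) :
    (μ.withDensity fun x => ENNReal.ofReal (p₁ x)).restrict {x | (c : ℝ)⁻¹ < p₀ x / p₁ x}
      ≤ (c : ℝ≥0∞) • μ.withDensity fun x => ENNReal.ofReal (p₀ x) := by
  refine restrict_withDensity_le_smul_withDensity
    (measurableSet_lt measurable_const (hp₀.div hp₁)) fun x hx => ?_
  rcases le_or_gt (p₁ x) 0 with h | h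
  · simp [ENNReal.ofReal_of_nonpos h]
  · have hx : (c : ℝ)⁻¹ < p₀ x / p₁ x := hx
    have hlt : p₁ x < c * p₀ x := by
      rwa [lt_div_iff₀ h, inv_mul_lt_iff₀ (NNReal.coe_pos.2 hc)] at hx
    rw [← ENNReal.ofReal_coe_nnreal, ← ENNReal.ofReal_mul c.coe_nonneg]
    exact ENNReal.ofReal_le_ofReal hlt.le

end Densities

lemma measureReal_le_mul_add_compl {X : Type*} [MeasurableSpace X] {P₀ P₁ : Measure X}
    [IsFiniteMeasure P₀] [IsFiniteMeasure P₁] {A : Set X} (hA : MeasurableSet A) {c : ℝ≥0}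
    (h : P₁.restrict A ≤ (c : ℝ≥0∞) • P₀) (B : Set X) :
    P₁.real A ≤ c * P₀.real B + P₁.real Bᶜ := by
  have hB : P₁ (A ∩ B) ≤ c * P₀ B := by
    rw [inter_comm, ← Measure.restrict_apply' hA]; exact h B
  have hle : P₁ A ≤ c * P₀ B + P₁ Bᶜ :=
    (measure_le_inter_add_sdiff (μ := P₁) A B).trans
      (add_le_add hB (measure_mono (sdiff_subset_compl A B)))
  have := ENNReal.toReal_mono (by finiteness) hle
  rwa [ENNReal.toReal_add (by finiteness) (by finiteness), ENNReal.toReal_mul] at this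

lemma add_sqrt_two_mul_div_log_two_lt {K : ℝ} (hK : K ≤ 1 / 100) :
    (K + √(2 * K)) / log 2 < 1 / 4 := by
  have hsqrt : √(2 * K) ≤ 3 / 20 := sqrt_le_iff.2 ⟨by norm_num, by linarith⟩
  rw [div_lt_iff₀ (log_pos one_lt_two)]
  linarith [log_two_gt_d9]

theorem stmt_3_general {X : Type*} [MeasurableSpace X] (μ : Measure X)
    (p₀ p₁ : X → ℝ) (hp₀m : Measurable p₀) (hp₁m : Measurable p₁)
    (P₀ P₁ : Measure X)
    (hP₀ : P₀ = μ.withDensity fun x => ENNReal.ofReal (p₀ x))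
    (hP₁ : P₁ = μ.withDensity fun x => ENNReal.ofReal (p₁ x))
    [IsProbabilityMeasure P₀] [IsProbabilityMeasure P₁]
    (hac : P₁ ≪ P₀)
    (hint : Integrable (fun x => Real.log (p₁ x / p₀ x)) P₁)
    (K : ℝ) (hK : K = ∫ x, Real.log (p₁ x / p₀ x) ∂P₁) :
    (∀ B : Set X, MeasurableSet B →
        (1 / 3) * (1 - (K + Real.sqrt (2 * K)) / Real.log 2)
          ≤ max (P₀ B).toReal (P₁ Bᶜ).toReal) ∧
    ∃ μ₀ : ℝ, 0 < μ₀ ∧ (K ≤ μ₀ →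
      ∀ B : Set X, MeasurableSet B →
        (1 / 4 : ℝ) < max (P₀ B).toReal (P₁ Bᶜ).toReal) := by
  set t : X → ℝ := fun x => p₀ x / p₁ x
  have ht_pos : ∀ᵐ x ∂P₁, 0 < t x := by
    subst hP₀ hP₁; exact ae_div_pos_of_absolutelyContinuous hp₀m hp₁m hac
  obtain ⟨ht_int, ht_le⟩ : Integrable t P₁ ∧ ∫ x, t x ∂P₁ ≤ 1 := by
    subst hP₀ hP₁; exact integrable_div_and_integral_div_le_one hp₀m hp₁m ht_pos
  have hlog_inv : ∀ x, log (p₁ x / p₀ x) = -log (t x) := fun x => by rw [← log_inv, inv_div]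
  have hK' : K = -∫ x, log (t x) ∂P₁ := by simp only [hK, hlog_inv, integral_neg]
  have hmarkov := log_two_mul_measureReal_le ht_pos ht_int ht_le
    (by simpa [hlog_inv] using hint.neg)
  rw [← hK'] at hmarkov
  set A := {x | ((2 : ℝ≥0) : ℝ)⁻¹ < t x}
  have hA : MeasurableSet A := measurableSet_lt measurable_const (hp₀m.div hp₁m)
  have hlr : P₁.restrict A ≤ ((2 : ℝ≥0) : ℝ≥0∞) • P₀ := by
    subst hP₀ hP₁; exact restrict_withDensity_inv_lt_div_le_smul hp₀m hp₁m two_pos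
  have hA_add_compl : P₁.real A + P₁.real {x | t x ≤ 1 / 2} = 1 := by
    have hcompl : Aᶜ = {x | t x ≤ 1 / 2} := by ext x; simp [A]
    rw [← hcompl]; exact probReal_add_probReal_compl hA
  have hbound : ∀ B : Set X, MeasurableSet B →
      (1 / 3) * (1 - (K + √(2 * K)) / log 2) ≤ max (P₀ B).toReal (P₁ Bᶜ).toReal := by
    intro B _
    have htest := measureReal_le_mul_add_compl hA hlr B
    have hP₁Ac : P₁.real {x | t x ≤ 1 / 2} ≤ (K + √(2 * K)) / log 2 := by
      rw [le_div_iff₀ (log_pos one_lt_two)]; linarith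
    rw [NNReal.coe_ofNat] at htest
    rw [← measureReal_def, ← measureReal_def]
    linarith [le_max_left (P₀.real B) (P₁.real Bᶜ), le_max_right (P₀.real B) (P₁.real Bᶜ)]
  refine ⟨hbound, 1 / 100, by norm_num, fun hKle B hB => ?_⟩
  linarith [hbound B hB, add_sqrt_two_mul_div_log_two_lt hKle]

/-- Two-point testing lower bound via the Kullback–Leibler divergence: if `P₁ ≪ P₀` and
`K = K(P₁, P₀) = ∫ log(p₁/p₀) dP₁` is finite, then every measurable test `B` has maximal
error probability at least `(1/3)(1 − (K + √(2K))/log 2)`; in particular there is a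
universal `μ₀ > 0` such that `K ≤ μ₀` forces the maximal error probability of every test
to exceed `1/4`. -/
theorem stmt_3 {X : Type*} [MeasurableSpace X] (μ : Measure X) [SigmaFinite μ]
    (p₀ p₁ : X → ℝ) (hp₀m : Measurable p₀) (hp₁m : Measurable p₁)
    (hp₀ : ∀ x, 0 ≤ p₀ x) (hp₁ : ∀ x, 0 ≤ p₁ x)
    (P₀ P₁ : Measure X)
    (hP₀ : P₀ = μ.withDensity fun x => ENNReal.ofReal (p₀ x))
    (hP₁ : P₁ = μ.withDensity fun x => ENNReal.ofReal (p₁ x))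
    [IsProbabilityMeasure P₀] [IsProbabilityMeasure P₁]
    (hac : P₁ ≪ P₀)
    (hint : Integrable (fun x => Real.log (p₁ x / p₀ x)) P₁)
    (K : ℝ) (hK : K = ∫ x, Real.log (p₁ x / p₀ x) ∂P₁) :
    (∀ B : Set X, MeasurableSet B →
        (1 / 3) * (1 - (K + Real.sqrt (2 * K)) / Real.log 2)
          ≤ max (P₀ B).toReal (P₁ Bᶜ).toReal) ∧
    ∃ μ₀ : ℝ, 0 < μ₀ ∧ (K ≤ μ₀ →
      ∀ B : Set X, MeasurableSet B →
        (1 / 4 : ℝ) < max (P₀ B).toReal (P₁ Bᶜ).toReal) :=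
  stmt_3_general μ p₀ p₁ hp₀m hp₁m P₀ P₁ hP₀ hP₁ hac hint K hK
end

section
/- Let p, q, r, s ∈ ℝ with p ≤ r and q ≥ s, and let (c_{jk})_{j,k≥1} be real numbers such that for some M ≥ 0 and for every j ≥ 1, Σ_{k≥1} (1+λ_k)^{q} c_{jk}² ≤ M² (1+λ_j)^{p−(d−1)}. Then ‖c‖_{r,s} is finite and satisfies ‖c‖_{r,s} ≤ C M for a constant C > 0 depending only on d, C₁, C₂ and the differences r − p and q − s. -/
/-!
By the row hypothesis and `s ≤ q`, row `j` contributes at most `M² (1 + λ_j)^(p - r - (d - 1))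
≤ M² (1 + λ_j)^(-(d - 1))` to `‖c‖²_{r,s}`, because `p ≤ r` and `1 + λ_j ≥ 1`. Weyl's lower
bound `λ_j ≥ C₁ j^(2/(d-1))` turns `(1 + λ_j)^(-(d - 1))` into `C₁^(-(d-1)) j⁻²`, which sums to
`C₁^(-(d-1)) π²/6`.
-/

open scoped ENNReal

theorem tsum_prod_weighted_le_of_row_bound {w : ℕ → ℝ} (hw : ∀ k, 1 ≤ w k)
    {p q r s e M : ℝ} (hpr : p ≤ r) (hsq : s ≤ q) {c : ℕ → ℕ → ℝ}
    (hrow : ∀ j, ∑' k, ENNReal.ofReal (w k ^ q * c j k ^ 2)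
      ≤ ENNReal.ofReal (M ^ 2 * w j ^ (p - e))) :
    ∑' jk : ℕ × ℕ, ENNReal.ofReal (w jk.1 ^ (-r) * w jk.2 ^ s * c jk.1 jk.2 ^ 2)
      ≤ ENNReal.ofReal (M ^ 2) * ∑' j, ENNReal.ofReal (w j ^ (-e)) := by
  have hw0 : ∀ k, 0 < w k := fun k => zero_lt_one.trans_le (hw k)
  rw [ENNReal.tsum_prod (f := fun j k => ENNReal.ofReal (w j ^ (-r) * w k ^ s * c j k ^ 2)),
    ← ENNReal.tsum_mul_left]
  refine ENNReal.tsum_le_tsum fun j => ?_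
  have hwj : 0 ≤ w j ^ (-r) := (Real.rpow_pos_of_pos (hw0 j) _).le
  calc ∑' k, ENNReal.ofReal (w j ^ (-r) * w k ^ s * c j k ^ 2)
      ≤ ∑' k, ENNReal.ofReal (w j ^ (-r)) * ENNReal.ofReal (w k ^ q * c j k ^ 2) := by
        refine ENNReal.tsum_le_tsum fun k => ?_
        rw [← ENNReal.ofReal_mul hwj, mul_assoc]
        gcongr
        exact hw k
    _ ≤ ENNReal.ofReal (w j ^ (-r)) * ENNReal.ofReal (M ^ 2 * w j ^ (p - e)) := by
        rw [ENNReal.tsum_mul_left]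
        gcongr
        exact hrow j
    _ = ENNReal.ofReal (M ^ 2) * ENNReal.ofReal (w j ^ (p - r - e)) := by
        rw [← ENNReal.ofReal_mul hwj, ← ENNReal.ofReal_mul (sq_nonneg M),
          show p - r - e = -r + (p - e) by ring, Real.rpow_add (hw0 j)]
        ring_nf
    _ ≤ ENNReal.ofReal (M ^ 2) * ENNReal.ofReal (w j ^ (-e)) := by
        gcongr
        exacts [hw j, by linarith]

theorem one_add_rpow_neg_le_of_le {C D x l : ℝ} (hC : 0 < C) (hD : 0 < D) (hx : 0 < x)
    (hl : C * x ^ (2 / D) ≤ l) :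
    (1 + l) ^ (-D) ≤ C ^ (-D) * (x ^ 2)⁻¹ := by
  have hCx : 0 < C * x ^ (2 / D) := by positivity
  calc (1 + l) ^ (-D) ≤ (C * x ^ (2 / D)) ^ (-D) :=
        Real.rpow_le_rpow_of_nonpos hCx (by linarith) (by linarith)
    _ = C ^ (-D) * (x ^ 2)⁻¹ := by
        rw [Real.mul_rpow hC.le (by positivity), ← Real.rpow_mul hx.le,
          show 2 / D * -D = -2 by field_simp, Real.rpow_neg hx.le, Real.rpow_two]

theorem tsum_ofReal_inv_succ_sq :
    ∑' j : ℕ, ENNReal.ofReal ((((j : ℝ) + 1) ^ 2)⁻¹) = ENNReal.ofReal (Real.pi ^ 2 / 6) := by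
  have h : HasSum (fun j : ℕ => (((j : ℝ) + 1) ^ 2)⁻¹) (Real.pi ^ 2 / 6) := by
    simpa using (hasSum_nat_add_iff' 1).mpr hasSum_zeta_two
  rw [← ENNReal.ofReal_tsum_of_nonneg (fun j => by positivity) h.summable, h.tsum_eq]

theorem tsum_ofReal_one_add_rpow_neg_le {C D : ℝ} (hC : 0 < C) (hD : 0 < D) {lam : ℕ → ℝ}
    (hlam : ∀ k : ℕ, C * ((k : ℝ) + 1) ^ (2 / D) ≤ lam k) :
    ∑' j, ENNReal.ofReal ((1 + lam j) ^ (-D))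
      ≤ ENNReal.ofReal (C ^ (-D) * (Real.pi ^ 2 / 6)) := by
  calc ∑' j, ENNReal.ofReal ((1 + lam j) ^ (-D))
      ≤ ∑' j : ℕ, ENNReal.ofReal (C ^ (-D)) * ENNReal.ofReal ((((j : ℝ) + 1) ^ 2)⁻¹) := by
        refine ENNReal.tsum_le_tsum fun j => ?_
        rw [← ENNReal.ofReal_mul (by positivity)]
        exact ENNReal.ofReal_le_ofReal
          (one_add_rpow_neg_le_of_le hC hD (by positivity) (hlam j))
    _ = ENNReal.ofReal (C ^ (-D) * (Real.pi ^ 2 / 6)) := by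
        rw [ENNReal.tsum_mul_left, tsum_ofReal_inv_succ_sq, ENNReal.ofReal_mul (by positivity)]

theorem ENNReal.rpow_one_div_two_le_ofReal_sqrt_mul {x : ℝ≥0∞} {K M : ℝ} (hK : 0 ≤ K)
    (hM : 0 ≤ M) (hx : x ≤ ENNReal.ofReal (M ^ 2) * ENNReal.ofReal K) :
    x ^ ((1 : ℝ) / 2) ≤ ENNReal.ofReal (Real.sqrt K * M) := by
  rw [one_div, ENNReal.rpow_inv_le_iff two_pos, ENNReal.rpow_two,
    ← ENNReal.ofReal_pow (by positivity), mul_pow, Real.sq_sqrt hK, mul_comm,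
    ENNReal.ofReal_mul (sq_nonneg M)]
  exact hx

theorem stmt_5_general (d : ℕ) (hd : 2 ≤ d) (C₁ C₂ : ℝ) (hC₁ : 0 < C₁)
    (a b : ℝ) :
    ∃ C : ℝ, 0 < C ∧
      ∀ lam : ℕ → ℝ,
        (∀ k : ℕ, C₁ * ((k : ℝ) + 1) ^ (2 / ((d : ℝ) - 1)) ≤ lam k ∧
            lam k ≤ C₂ * ((k : ℝ) + 1) ^ (2 / ((d : ℝ) - 1))) →
        ∀ p q r s : ℝ, p ≤ r → s ≤ q → r - p = a → q - s = b →
        ∀ M : ℝ, 0 ≤ M →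
        ∀ c : ℕ → ℕ → ℝ,
          (∀ j : ℕ, ∑' k : ℕ, ENNReal.ofReal ((1 + lam k) ^ q * c j k ^ 2)
              ≤ ENNReal.ofReal (M ^ 2 * (1 + lam j) ^ (p - ((d : ℝ) - 1)))) →
          (∑' jk : ℕ × ℕ, ENNReal.ofReal
              ((1 + lam jk.1) ^ (-r) * (1 + lam jk.2) ^ s * c jk.1 jk.2 ^ 2)) ^ ((1 : ℝ) / 2)
            ≤ ENNReal.ofReal (C * M) := by
  have hD : (0 : ℝ) < d - 1 := by
    have : (2 : ℝ) ≤ d := by exact_mod_cast hd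
    linarith
  refine ⟨Real.sqrt (C₁ ^ (-((d : ℝ) - 1)) * (Real.pi ^ 2 / 6)), by positivity, ?_⟩
  intro lam hlam p q r s hpr hsq _ _ M hM c hrow
  have hlam_lower : ∀ k : ℕ, C₁ * ((k : ℝ) + 1) ^ (2 / ((d : ℝ) - 1)) ≤ lam k :=
    fun k => (hlam k).1
  have hw : ∀ k, 1 ≤ 1 + lam k := fun k =>
    le_add_of_nonneg_right ((by positivity : (0 : ℝ) ≤ _).trans (hlam_lower k))
  refine ENNReal.rpow_one_div_two_le_ofReal_sqrt_mul (by positivity) hM ?_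
  calc _ ≤ ENNReal.ofReal (M ^ 2) * ∑' j, ENNReal.ofReal ((1 + lam j) ^ (-((d : ℝ) - 1))) :=
        tsum_prod_weighted_le_of_row_bound hw hpr hsq hrow
    _ ≤ _ := by gcongr; exact tsum_ofReal_one_add_rpow_neg_le hC₁ hD hlam_lower

/-- Coefficient form of the first part of Lemma B.2: if the operator with coefficient
array `c` maps `H^{p-(d-1)}` to `H^q` with norm at most `M` on the basis vectors (the
row-sum hypothesis), and `p ≤ r`, `q ≥ s`, then the weighted Hilbert–Schmidt norm
`‖c‖_{r,s}` is finite and bounded by `C·M`, with `C` depending only on `d`, `C₁`, `C₂`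
and the differences `a = r − p`, `b = q − s`. Here `lam k` stands for the eigenvalue
`λ_{k+1}` (0-based indexing), satisfying the Weyl-law two-sided bound. The conclusion is
stated in `ℝ≥0∞`, so finiteness of the norm is part of the claim. -/
theorem stmt_5 (d : ℕ) (hd : 2 ≤ d) (C₁ C₂ : ℝ) (hC₁ : 0 < C₁) (hC₂ : 0 < C₂)
    (a b : ℝ) :
    ∃ C : ℝ, 0 < C ∧
      ∀ lam : ℕ → ℝ,
        (∀ k : ℕ, C₁ * ((k : ℝ) + 1) ^ (2 / ((d : ℝ) - 1)) ≤ lam k ∧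
            lam k ≤ C₂ * ((k : ℝ) + 1) ^ (2 / ((d : ℝ) - 1))) →
        ∀ p q r s : ℝ, p ≤ r → s ≤ q → r - p = a → q - s = b →
        ∀ M : ℝ, 0 ≤ M →
        ∀ c : ℕ → ℕ → ℝ,
          (∀ j : ℕ, ∑' k : ℕ, ENNReal.ofReal ((1 + lam k) ^ q * c j k ^ 2)
              ≤ ENNReal.ofReal (M ^ 2 * (1 + lam j) ^ (p - ((d : ℝ) - 1)))) →
          (∑' jk : ℕ × ℕ, ENNReal.ofReal
              ((1 + lam jk.1) ^ (-r) * (1 + lam jk.2) ^ s * c jk.1 jk.2 ^ 2)) ^ ((1 : ℝ) / 2)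
            ≤ ENNReal.ofReal (C * M) :=
  stmt_5_general d hd C₁ C₂ hC₁ a b
end
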